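/- arXiv:2505.09255 — 3 statements merged into one kernel-verified Lean document; each statement's English description precedes it below -/
import Mathlib

section
/- Let A ∈ ℝ^{n×n}, B ∈ ℝ^{n×m}, C ∈ ℝ^{p×n}, E ∈ ℝ^{n×q}, F ∈ ℝ^{p×q}, S ∈ ℝ^{q×q} and K_x ∈ ℝ^{m×n}. Suppose A + B K_x is Hurwitz and that there exist Π ∈ ℝ^{n×q} and Γ ∈ ℝ^{m×q} solving the output regulation equations Π S = A Π + B Γ + E and 0 = C Π + F. Set K_v := Γ − K_x Π. Then for all differentiable functions x : ℝ → ℝⁿ and v : ℝ → ℝ^q satisfying ẋ(t) = A x(t) + B (K_x x(t) + K_v v(t)) + E v(t) and v̇(t) = S v(t) for all t ≥ 0, the tracking error e(t) := C x(t) + F v(t) tends to 0 as t → ∞. -/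
/-!
In the coordinates `z = x - Π v` the regulator equations cancel the exosystem from the closed
loop, which becomes `ż = (A + B Kx) z`, while the tracking error becomes `e = C z`. Hence
`z t = exp (t (A + B Kx)) z 0`, and this decays because every vector splits into generalized
eigenvectors of the complexified matrix, on each of which the exponential is `exp (t μ)` times a
polynomial in `t`, with `Re μ < 0`.
-/

open Matrix Filter NormedSpace Finset Topology
open scoped Nat

section MatrixExponential

variable {ι : Type*} [Fintype ι] [DecidableEq ι]

theorem Matrix.hasSum_expSeries {𝕂 : Type*} [RCLike 𝕂] (X : Matrix ι ι 𝕂) :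
    HasSum (fun n => (n !⁻¹ : 𝕂) • X ^ n) (exp X) :=
  open scoped Matrix.Norms.Operator in exp_series_hasSum_exp' X

theorem Matrix.exp_smul_mulVec_eq_sum_of_pow_mulVec_eq_zero {M : Matrix ι ι ℂ} {μ : ℂ} {k : ℕ}
    {w : ι → ℂ} (hw : (M - μ • 1) ^ k *ᵥ w = 0) (τ : ℂ) :
    exp (τ • M) *ᵥ w =
      ∑ j ∈ range k, (τ ^ j * Complex.exp (τ * μ) / j !) • ((M - μ • 1) ^ j *ᵥ w) := by
  set N := M - μ • 1
  have hNw : exp (τ • N) *ᵥ w = ∑ j ∈ range k, (τ ^ j / j !) • (N ^ j *ᵥ w) := by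
    have hseries : HasSum (fun n => ((n !⁻¹ : ℂ) • (τ • N) ^ n) *ᵥ w) (exp (τ • N) *ᵥ w) :=
      (hasSum_expSeries _).map (mulVec.addMonoidHomLeft w)
        (continuous_id.matrix_mulVec continuous_const)
    refine hseries.unique (hasSum_sum_of_ne_finset_zero fun j hj => ?_) |>.trans
      (sum_congr rfl fun j _ => ?_)
    · obtain ⟨i, rfl⟩ := Nat.exists_eq_add_of_le (by simpa using hj)
      simp [smul_pow, add_comm k i, pow_add, Matrix.smul_mulVec, ← mulVec_mulVec, hw]
    · simp [smul_pow, Matrix.smul_mulVec, smul_smul, div_eq_inv_mul]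
  have hsplit : τ • M = algebraMap ℂ _ (τ * μ) + τ • N := by
    rw [Algebra.algebraMap_eq_smul_one, mul_smul, ← smul_add, add_sub_cancel]
  have hscalar : exp (algebraMap ℂ (Matrix ι ι ℂ) (τ * μ)) =
      algebraMap ℂ _ (Complex.exp (τ * μ)) := by
    rw [Complex.exp_eq_exp_ℂ]
    open scoped Matrix.Norms.Operator in exact (algebraMap_exp_comm _).symm
  rw [hsplit, Matrix.exp_add_of_commute _ _ (Algebra.commute_algebraMap_left _ _), hscalar,
    Algebra.algebraMap_eq_smul_one, smul_mul_assoc, one_mul, smul_mulVec, hNw, smul_sum]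
  exact sum_congr rfl fun j _ => by rw [smul_smul]; ring_nf

theorem tendsto_pow_mul_cexp_atTop_nhds_zero {μ : ℂ} (hμ : μ.re < 0) (j : ℕ) :
    Tendsto (fun t : ℝ => (t : ℂ) ^ j * Complex.exp (t * μ)) atTop (𝓝 0) := by
  rw [tendsto_zero_iff_norm_tendsto_zero]
  refine (tendsto_rpow_mul_exp_neg_mul_atTop_nhds_zero j (-μ.re) (by linarith)).congr' ?_
  filter_upwards [eventually_ge_atTop 0] with t ht
  simp [Complex.norm_exp, abs_of_nonneg ht, mul_comm]

theorem Matrix.tendsto_exp_smul_mulVec_of_pow_mulVec_eq_zero {M : Matrix ι ι ℂ} {μ : ℂ}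
    (hμ : μ.re < 0) {k : ℕ} {w : ι → ℂ} (hw : (M - μ • 1) ^ k *ᵥ w = 0) :
    Tendsto (fun t : ℝ => exp (t • M) *ᵥ w) atTop (𝓝 0) := by
  have hexpand : ∀ t : ℝ, exp (t • M) *ᵥ w = ∑ j ∈ range k,
      ((t : ℂ) ^ j * Complex.exp (t * μ) / j !) • ((M - μ • 1) ^ j *ᵥ w) := fun t => by
    rw [← exp_smul_mulVec_eq_sum_of_pow_mulVec_eq_zero hw, Complex.coe_smul]
  simp_rw [hexpand]
  rw [← sum_const_zero (s := range k)]
  refine tendsto_finsetSum _ fun j _ => ?_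
  simpa using ((tendsto_pow_mul_cexp_atTop_nhds_zero hμ j).div_const _).smul_const
    ((M - μ • 1) ^ j *ᵥ w)

theorem Matrix.tendsto_exp_smul_mulVec_of_forall_re_neg {M : Matrix ι ι ℂ}
    (hM : ∀ μ ∈ spectrum ℂ M, μ.re < 0) (w : ι → ℂ) :
    Tendsto (fun t : ℝ => exp (t • M) *ᵥ w) atTop (𝓝 0) := by
  have hw : w ∈ ⨆ μ, Module.End.maxGenEigenspace (toLinAlgEquiv' M) μ := by
    rw [Module.End.iSup_maxGenEigenspace_eq_top]
    trivial
  refine Submodule.iSup_induction _ (motive := fun w => Tendsto (fun t : ℝ => exp (t • M) *ᵥ w)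
    atTop (𝓝 0)) hw (fun μ w hw => ?_) (by simp) fun w₁ w₂ h₁ h₂ => by
      simpa [mulVec_add] using h₁.add h₂
  obtain ⟨k, hk⟩ := (Module.End.mem_maxGenEigenspace _ _ _).1 hw
  rw [← map_one (toLinAlgEquiv' (R := ℂ) (n := ι)), ← map_smul, ← map_sub, ← map_pow,
    toLinAlgEquiv'_apply] at hk
  by_cases hμ : μ ∈ spectrum ℂ M
  · exact tendsto_exp_smul_mulVec_of_pow_mulVec_eq_zero (hM μ hμ) hk
  · have hunit : IsUnit ((M - μ • 1) ^ k) := by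
      rw [← neg_sub, ← Algebra.algebraMap_eq_smul_one]
      exact ((spectrum.notMem_iff.1 hμ).neg).pow k
    obtain rfl : w = 0 := mulVec_injective_iff_isUnit.2 hunit (by rw [hk, mulVec_zero])
    simp

theorem Matrix.map_exp_ofReal (M : Matrix ι ι ℝ) :
    (exp M).map (algebraMap ℝ ℂ) = exp (M.map (algebraMap ℝ ℂ)) :=
  open scoped Matrix.Norms.Operator in
  map_exp (algebraMap ℝ ℂ).mapMatrix (continuous_id.matrix_map (continuous_algebraMap ℝ ℂ)) M

def Matrix.IsHurwitz (M : Matrix ι ι ℝ) : Prop :=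
  ∀ μ ∈ spectrum ℂ (M.map (algebraMap ℝ ℂ)), μ.re < 0

theorem Matrix.IsHurwitz.tendsto_exp_smul_mulVec {M : Matrix ι ι ℝ} (hM : M.IsHurwitz)
    (w : ι → ℝ) : Tendsto (fun t : ℝ => exp (t • M) *ᵥ w) atTop (𝓝 0) := by
  have hc := tendsto_exp_smul_mulVec_of_forall_re_neg hM (algebraMap ℝ ℂ ∘ w)
  refine tendsto_pi_nhds.2 fun i => ?_
  have hlim := (Complex.continuous_re.tendsto 0).comp (tendsto_pi_nhds.1 hc i)
  rw [Complex.zero_re] at hlim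
  refine hlim.congr fun t => ?_
  have hmap : (t • M).map (algebraMap ℝ ℂ) = t • M.map (algebraMap ℝ ℂ) := by
    ext; simp [Complex.real_smul]
  rw [Function.comp_apply, ← hmap, ← map_exp_ofReal, ← RingHom.map_mulVec]
  exact Complex.ofReal_re _

theorem Matrix.hasDerivAt_exp_smul_mulVec (M : Matrix ι ι ℝ) (w : ι → ℝ) (t : ℝ) :
    HasDerivAt (fun u : ℝ => exp (u • M) *ᵥ w) (M *ᵥ (exp (t • M) *ᵥ w)) t := by
  open scoped Matrix.Norms.Operator in
  have hL := ((mulVec.addMonoidHomLeft w).toRealLinearMap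
    (continuous_id.matrix_mulVec continuous_const)).hasFDerivAt.comp_hasDerivAt t
      (hasDerivAt_exp_smul_const' (𝕂 := ℝ) M t)
  rw [mulVec_mulVec]
  exact hL

theorem Matrix.eq_exp_smul_mulVec_of_hasDerivAt (M : Matrix ι ι ℝ) {z : ℝ → ι → ℝ}
    (hz : ∀ t, 0 ≤ t → HasDerivAt z (M *ᵥ z t) t) {t : ℝ} (ht : 0 ≤ t) :
    z t = exp (t • M) *ᵥ z 0 := by
  have hexp := M.hasDerivAt_exp_smul_mulVec (z 0)
  refine ODE_solution_unique_of_mem_Icc_right (v := fun _ => (M *ᵥ ·)) (s := fun _ => Set.univ)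
    (fun _ _ => M.mulVecLin.toContinuousLinearMap.lipschitz.lipschitzOnWith)
    (fun s hs => (hz s hs.1).continuousAt.continuousWithinAt)
    (fun s hs => (hz s hs.1).hasDerivWithinAt) (fun _ _ => trivial)
    (fun s _ => (hexp s).continuousAt.continuousWithinAt)
    (fun s _ => (hexp s).hasDerivWithinAt) (fun _ _ => trivial) (by simp) ⟨ht, le_rfl⟩

theorem Matrix.IsHurwitz.tendsto_of_hasDerivAt {M : Matrix ι ι ℝ} (hM : M.IsHurwitz)
    {z : ℝ → ι → ℝ} (hz : ∀ t, 0 ≤ t → HasDerivAt z (M *ᵥ z t) t) :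
    Tendsto z atTop (𝓝 0) :=
  (hM.tendsto_exp_smul_mulVec (z 0)).congr' <| by
    filter_upwards [eventually_ge_atTop 0] with t ht
    exact (M.eq_exp_smul_mulVec_of_hasDerivAt hz ht).symm

end MatrixExponential

section OutputRegulation

variable {n m p q : Type*} [Fintype n] [Fintype m] [Fintype q]
  {A : Matrix n n ℝ} {B : Matrix n m ℝ} {C : Matrix p n ℝ} {E : Matrix n q ℝ} {F : Matrix p q ℝ}
  {S : Matrix q q ℝ} {Kx : Matrix m n ℝ} {Kv : Matrix m q ℝ} {Pm : Matrix n q ℝ} {Gm : Matrix m q ℝ}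

theorem HasDerivAt.matrix_const_mulVec (P : Matrix n q ℝ) {v : ℝ → q → ℝ} {v' : q → ℝ} {t : ℝ}
    (hv : HasDerivAt v v' t) : HasDerivAt (fun s => P *ᵥ v s) (P *ᵥ v') t :=
  P.mulVecLin.toContinuousLinearMap.hasFDerivAt.comp_hasDerivAt t hv

theorem closedLoop_sub_mulVec_eq_of_regulator (hPm : Pm * S = A * Pm + B * Gm + E)
    (hKv : Kv = Gm - Kx * Pm) (x : n → ℝ) (v : q → ℝ) :
    A *ᵥ x + B *ᵥ (Kx *ᵥ x + Kv *ᵥ v) + E *ᵥ v - Pm *ᵥ (S *ᵥ v) =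
      (A + B * Kx) *ᵥ (x - Pm *ᵥ v) := by
  rw [mulVec_mulVec, hPm, hKv]
  simp only [add_mulVec, sub_mulVec, mulVec_add, mulVec_sub, mulVec_mulVec, Matrix.add_mul,
    Matrix.mul_assoc]
  abel

theorem error_eq_mulVec_sub_of_regulator (hF : 0 = C * Pm + F) (x : n → ℝ) (v : q → ℝ) :
    C *ᵥ x + F *ᵥ v = C *ᵥ (x - Pm *ᵥ v) := by
  rw [eq_neg_of_add_eq_zero_right hF.symm, neg_mulVec, mulVec_sub, mulVec_mulVec, sub_eq_add_neg]

end OutputRegulation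

/-- Static feedback output regulation: if `A + B Kx` is Hurwitz and `(Π, Γ)` solve the
output regulation equations `Π S = A Π + B Γ + E`, `0 = C Π + F`, then with
`Kv = Γ − Kx Π` the tracking error `e = C x + F v` of the closed loop tends to `0`. -/
theorem stmt_4 (n m p q : ℕ)
    (A : Matrix (Fin n) (Fin n) ℝ) (B : Matrix (Fin n) (Fin m) ℝ)
    (C : Matrix (Fin p) (Fin n) ℝ) (E : Matrix (Fin n) (Fin q) ℝ)
    (F : Matrix (Fin p) (Fin q) ℝ) (S : Matrix (Fin q) (Fin q) ℝ)
    (Kx : Matrix (Fin m) (Fin n) ℝ)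
    (hHur : ∀ μ ∈ spectrum ℂ ((A + B * Kx).map (algebraMap ℝ ℂ)), μ.re < 0)
    (Pm : Matrix (Fin n) (Fin q) ℝ) (Gm : Matrix (Fin m) (Fin q) ℝ)
    (hORE1 : Pm * S = A * Pm + B * Gm + E)
    (hORE2 : 0 = C * Pm + F)
    (Kv : Matrix (Fin m) (Fin q) ℝ) (hKv : Kv = Gm - Kx * Pm) :
    ∀ (x : ℝ → Fin n → ℝ) (v : ℝ → Fin q → ℝ),
      (∀ t, 0 ≤ t → HasDerivAt x
        (A.mulVec (x t) + B.mulVec (Kx.mulVec (x t) + Kv.mulVec (v t))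
          + E.mulVec (v t)) t) →
      (∀ t, 0 ≤ t → HasDerivAt v (S.mulVec (v t)) t) →
      Tendsto (fun t => C.mulVec (x t) + F.mulVec (v t)) atTop (nhds 0) := by
  intro x v hx hv
  have hz : ∀ t, 0 ≤ t →
      HasDerivAt (fun s => x s - Pm *ᵥ v s) ((A + B * Kx) *ᵥ (x t - Pm *ᵥ v t)) t := by
    intro t ht
    rw [← closedLoop_sub_mulVec_eq_of_regulator hORE1 hKv]
    exact (hx t ht).sub ((hv t ht).matrix_const_mulVec Pm)
  have hdecay := (show (A + B * Kx).IsHurwitz from hHur).tendsto_of_hasDerivAt hz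
  simp only [error_eq_mulVec_sub_of_regulator hORE2]
  simpa [Function.comp_def] using
    ((continuous_const.matrix_mulVec continuous_id).tendsto 0).comp hdecay
end

section
/- Let T, m, n be positive integers, let U₋ ∈ ℝ^{m×T}, Ξ₋ ∈ ℝ^{n×T}, Ξ₊ ∈ ℝ^{n×T}, Δ ∈ ℝ^{n×p}, and let W := [Ξ₋; U₋] ∈ ℝ^{(n+m)×T}. Suppose there exist matrices A ∈ ℝ^{n×n}, B ∈ ℝ^{n×m} and N ∈ ℝ^{n×T} such that Ξ₊ = A Ξ₋ + B U₋ + N and N Nᵀ ⪯ Δ Δᵀ. Define Ψ := W Wᵀ, Υ := −W Ξ₊ᵀ, Σ := Ξ₊ Ξ₊ᵀ − Δ Δᵀ. If there exist a symmetric P ≻ 0 and Y ∈ ℝ^{m×n} such that the block matrix [[−Σ, Υᵀ − Zᵀ], [Υ − Z, −Ψ]] with Z := [P; Y] is negative definite, then with K := Y P⁻¹ one has (Ā + B̄ K) P + P (Ā + B̄ K)ᵀ ≺ 0 for every pair (Ā, B̄) with Φᵀ := [Ā B̄] satisfying Σ + Υᵀ Φ + Φᵀ Υ + Φᵀ Ψ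 Φ ⪯ 0; in particular, A + B K is Hurwitz. -/
/-!
Write `G = [Ā B̄]` and `Z = [P; Y]`, so that `G Z = (Ā + B̄ K) P`. Congruence of the negated
LMI matrix by `[I; -Gᵀ]` gives `(Σ + Υᵀ Gᵀ + G Υ + G Ψ Gᵀ) - (G Z + (G Z)ᵀ) ≻ 0`, and adding the
consistency inequality for `G` leaves `-(G Z + (G Z)ᵀ) ≻ 0`. The true `[A B]` is consistent with
the data because `-(Σ + …)` equals `Δ Δᵀ - N Nᵀ` for it. Finally, a Lyapunov inequality
`M P + P Mᵀ ≺ 0` with `P ⪰ 0` forces `Re μ < 0`: testing it on a left eigenvector `w` of `M`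
gives `2 Re μ · w* P w < 0`.
-/

open Matrix

namespace Matrix

variable {k : Type*} [Fintype k]

def IsHurwitz_s7 [DecidableEq k] (M : Matrix k k ℝ) : Prop :=
  ∀ μ ∈ spectrum ℂ (M.map (algebraMap ℝ ℂ)), μ.re < 0

theorem re_star_dotProduct_map_ofReal_mulVec (R : Matrix k k ℝ) (v : k → ℂ) :
    (star v ⬝ᵥ R.map (algebraMap ℝ ℂ) *ᵥ v).re
      = (fun i => (v i).re) ⬝ᵥ R *ᵥ (fun i => (v i).re)
        + (fun i => (v i).im) ⬝ᵥ R *ᵥ (fun i => (v i).im) := by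
  simp only [dotProduct, mulVec, Pi.star_apply, map_apply, Complex.re_sum, Complex.mul_re,
    Complex.mul_im, Complex.star_def, Complex.conj_re, Complex.conj_im, Complex.coe_algebraMap,
    Complex.ofReal_re, Complex.ofReal_im, Finset.mul_sum, ← Finset.sum_add_distrib]
  refine Finset.sum_congr rfl fun i _ => Finset.sum_congr rfl fun j _ => ?_
  ring

theorem PosSemidef.re_star_dotProduct_map_ofReal_mulVec_nonneg {R : Matrix k k ℝ}
    (hR : R.PosSemidef) (v : k → ℂ) :
    0 ≤ (star v ⬝ᵥ R.map (algebraMap ℝ ℂ) *ᵥ v).re := by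
  rw [re_star_dotProduct_map_ofReal_mulVec]
  exact add_nonneg (by simpa using hR.dotProduct_mulVec_nonneg _)
    (by simpa using hR.dotProduct_mulVec_nonneg _)

theorem PosDef.re_star_dotProduct_map_ofReal_mulVec_pos {R : Matrix k k ℝ}
    (hR : R.PosDef) {v : k → ℂ} (hv : v ≠ 0) :
    0 < (star v ⬝ᵥ R.map (algebraMap ℝ ℂ) *ᵥ v).re := by
  have hnonneg (x : k → ℝ) : 0 ≤ x ⬝ᵥ R *ᵥ x := by
    simpa using hR.posSemidef.dotProduct_mulVec_nonneg x
  have hpos {x : k → ℝ} (hx : x ≠ 0) : 0 < x ⬝ᵥ R *ᵥ x := by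
    simpa using hR.dotProduct_mulVec_pos hx
  rw [re_star_dotProduct_map_ofReal_mulVec]
  by_cases hre : (fun i => (v i).re) = 0
  · have him : (fun i => (v i).im) ≠ 0 := fun him =>
      hv (funext fun i => Complex.ext (congrFun hre i) (congrFun him i))
    exact add_pos_of_nonneg_of_pos (hnonneg _) (hpos him)
  · exact add_pos_of_pos_of_nonneg (hpos hre) (hnonneg _)

theorem exists_vecMul_eq_smul_of_mem_spectrum {K : Type*} [Field K] [DecidableEq k]
    {M : Matrix k k K} {μ : K} (hμ : μ ∈ spectrum K M) : ∃ w ≠ 0, w ᵥ* M = μ • w := by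
  rw [spectrum.mem_iff, isUnit_iff_isUnit_det, isUnit_iff_ne_zero, not_not,
    ← exists_vecMul_eq_zero_iff] at hμ
  obtain ⟨w, hw, hwM⟩ := hμ
  refine ⟨w, hw, ?_⟩
  rw [vecMul_sub, Algebra.algebraMap_eq_smul_one, vecMul_smul, vecMul_one, sub_eq_zero] at hwM
  exact hwM.symm

theorem isHurwitz_of_lyapunov [DecidableEq k] {M P : Matrix k k ℝ} (hP : P.PosSemidef)
    (hM : (-(M * P + P * Mᵀ)).PosDef) : M.IsHurwitz_s7 := by
  intro μ hμ
  obtain ⟨w, hw, hwM⟩ := exists_vecMul_eq_smul_of_mem_spectrum hμ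
  set f := algebraMap ℝ ℂ
  set v := star w
  have hMv : (M.map f)ᵀ *ᵥ v = star μ • v := by
    have hreal : (M.map f)ᴴ = (M.map f)ᵀ := by
      ext i j; simp [f]
    rw [← hreal, ← star_vecMul, hwM, star_smul]
  have hquad : star v ⬝ᵥ (-(M * P + P * Mᵀ)).map f *ᵥ v
      = ((-(2 * μ.re) : ℝ) : ℂ) * (star v ⬝ᵥ P.map f *ᵥ v) := by
    rw [Matrix.map_neg _ (map_neg f), Matrix.map_add _ (map_add f), Matrix.map_mul,
      Matrix.map_mul, transpose_map, neg_mulVec, add_mulVec, ← mulVec_mulVec, ← mulVec_mulVec,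
      hMv, mulVec_smul, dotProduct_neg, dotProduct_add, dotProduct_mulVec _ (M.map f),
      star_star, hwM, smul_dotProduct, dotProduct_smul, smul_eq_mul, smul_eq_mul, ← add_mul,
      Complex.star_def, Complex.add_conj]
    push_cast; ring
  have hpos := hM.re_star_dotProduct_map_ofReal_mulVec_pos (star_ne_zero.mpr hw : v ≠ 0)
  have hnonneg := hP.re_star_dotProduct_map_ofReal_mulVec_nonneg v
  rw [hquad, Complex.re_ofReal_mul] at hpos
  nlinarith

end Matrix

section DataBasedControl

variable {n r t p : Type*} [Fintype r]

theorem neg_dataQuadForm_eq_sub_residual [Fintype t] [Fintype p] (Xip : Matrix n t ℝ)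
    (Δ : Matrix n p ℝ) (W : Matrix r t ℝ) (G : Matrix n r ℝ) :
    -((Xip * Xipᵀ - Δ * Δᵀ) + (-(W * Xipᵀ))ᵀ * Gᵀ + G * -(W * Xipᵀ)
        + G * (W * Wᵀ) * Gᵀ)
      = Δ * Δᵀ - (Xip - G * W) * (Xip - G * W)ᵀ := by
  simp only [transpose_neg, transpose_mul, transpose_sub, transpose_transpose, Matrix.mul_sub,
    Matrix.sub_mul, Matrix.neg_mul, Matrix.mul_neg, Matrix.mul_assoc]
  abel

theorem transpose_fromRows_one_mul_fromBlocks_mul [Fintype n] [DecidableEq n] (Sg : Matrix n n ℝ)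
    (Ups Z : Matrix r n ℝ) (Psi : Matrix r r ℝ) (G : Matrix n r ℝ) :
    (fromRows (1 : Matrix n n ℝ) (-Gᵀ))ᵀ * fromBlocks Sg (Zᵀ - Upsᵀ) (Z - Ups) Psi
        * fromRows (1 : Matrix n n ℝ) (-Gᵀ)
      = (Sg + Upsᵀ * Gᵀ + G * Ups + G * Psi * Gᵀ) - (G * Z + (G * Z)ᵀ) := by
  rw [transpose_fromRows, transpose_neg, transpose_transpose, transpose_one,
    fromCols_mul_fromBlocks, fromCols_mul_fromRows, transpose_mul]
  simp only [Matrix.one_mul, Matrix.mul_one, Matrix.neg_mul, Matrix.mul_neg, Matrix.mul_sub,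
    Matrix.sub_mul, Matrix.add_mul, Matrix.mul_assoc]
  abel

theorem posDef_neg_mul_add_transpose_of_lmi [Fintype n] [DecidableEq n] {Sg : Matrix n n ℝ}
    {Ups Z : Matrix r n ℝ} {Psi : Matrix r r ℝ}
    (hLMI : (-(fromBlocks (-Sg) (Upsᵀ - Zᵀ) (Ups - Z) (-Psi))).PosDef) {G : Matrix n r ℝ}
    (hG : (-(Sg + Upsᵀ * Gᵀ + G * Ups + G * Psi * Gᵀ)).PosSemidef) :
    (-(G * Z + (G * Z)ᵀ)).PosDef := by
  have hL : Function.Injective (fromRows (1 : Matrix n n ℝ) (-Gᵀ)).mulVec := fun x y hxy => by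
    simpa using congrArg (fun v => fun i => v (Sum.inl i)) hxy
  have hcongr := hLMI.conjTranspose_mul_mul_same hL
  rw [conjTranspose_eq_transpose_of_trivial, fromBlocks_neg, neg_neg, neg_neg, neg_sub, neg_sub,
    transpose_fromRows_one_mul_fromBlocks_mul] at hcongr
  convert hcongr.add_posSemidef hG using 1
  abel

end DataBasedControl

theorem stmt_7_general (T m n p : ℕ)
    (Um : Matrix (Fin m) (Fin T) ℝ)
    (Xim Xip : Matrix (Fin n) (Fin T) ℝ)
    (Δ : Matrix (Fin n) (Fin p) ℝ)
    (W : Matrix (Fin n ⊕ Fin m) (Fin T) ℝ) (hW : W = fromRows Xim Um)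
    (A : Matrix (Fin n) (Fin n) ℝ) (B : Matrix (Fin n) (Fin m) ℝ)
    (N : Matrix (Fin n) (Fin T) ℝ)
    (hdata : Xip = A * Xim + B * Um + N)
    (hN : (Δ * Δᵀ - N * Nᵀ).PosSemidef)
    (Psi : Matrix (Fin n ⊕ Fin m) (Fin n ⊕ Fin m) ℝ) (hPsi : Psi = W * Wᵀ)
    (Ups : Matrix (Fin n ⊕ Fin m) (Fin n) ℝ) (hUps : Ups = -(W * Xipᵀ))
    (Sg : Matrix (Fin n) (Fin n) ℝ) (hSg : Sg = Xip * Xipᵀ - Δ * Δᵀ)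
    (P : Matrix (Fin n) (Fin n) ℝ) (Y : Matrix (Fin m) (Fin n) ℝ)
    (hP : P.PosDef)
    (hLMI : (-(fromBlocks (-Sg) (Upsᵀ - (fromRows P Y)ᵀ)
        (Ups - fromRows P Y) (-Psi))).PosDef)
    (K : Matrix (Fin m) (Fin n) ℝ) (hK : K = Y * P⁻¹) :
    (∀ (Ab : Matrix (Fin n) (Fin n) ℝ) (Bb : Matrix (Fin n) (Fin m) ℝ),
      (-(Sg + Upsᵀ * (fromCols Ab Bb)ᵀ + fromCols Ab Bb * Ups
          + fromCols Ab Bb * Psi * (fromCols Ab Bb)ᵀ)).PosSemidef →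
      (-((Ab + Bb * K) * P + P * (Ab + Bb * K)ᵀ)).PosDef)
    ∧ (∀ μ ∈ spectrum ℂ ((A + B * K).map (algebraMap ℝ ℂ)), μ.re < 0) := by
  have hKP : K * P = Y := by
    rw [hK, Matrix.mul_assoc, nonsing_inv_mul P hP.det_pos.ne'.isUnit, Matrix.mul_one]
  have robust (Ab : Matrix (Fin n) (Fin n) ℝ) (Bb : Matrix (Fin n) (Fin m) ℝ)
      (hcons : (-(Sg + Upsᵀ * (fromCols Ab Bb)ᵀ + fromCols Ab Bb * Ups
          + fromCols Ab Bb * Psi * (fromCols Ab Bb)ᵀ)).PosSemidef) :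
      (-((Ab + Bb * K) * P + P * (Ab + Bb * K)ᵀ)).PosDef := by
    have hGZ : fromCols Ab Bb * fromRows P Y = (Ab + Bb * K) * P := by
      rw [fromCols_mul_fromRows, Matrix.add_mul, Matrix.mul_assoc, hKP]
    have h := posDef_neg_mul_add_transpose_of_lmi hLMI hcons
    rwa [hGZ, transpose_mul, ← conjTranspose_eq_transpose_of_trivial P,
      hP.isHermitian.eq] at h
  have htrue : (-(Sg + Upsᵀ * (fromCols A B)ᵀ + fromCols A B * Ups
      + fromCols A B * Psi * (fromCols A B)ᵀ)).PosSemidef := by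
    rwa [hSg, hUps, hPsi, neg_dataQuadForm_eq_sub_residual, hW, fromCols_mul_fromRows, hdata,
      add_sub_cancel_left]
  exact ⟨robust, isHurwitz_of_lyapunov hP.posSemidef (robust A B htrue)⟩

/-- Feasibility of the data-based LMI yields a gain `K = Y P⁻¹` which quadratically
stabilizes every system consistent with the noisy data; in particular `A + B K` is
Hurwitz for the true system. -/
theorem stmt_7 (T m n p : ℕ) (hT : 0 < T) (hm : 0 < m) (hn : 0 < n)
    (Um : Matrix (Fin m) (Fin T) ℝ)
    (Xim Xip : Matrix (Fin n) (Fin T) ℝ)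
    (Δ : Matrix (Fin n) (Fin p) ℝ)
    (W : Matrix (Fin n ⊕ Fin m) (Fin T) ℝ) (hW : W = fromRows Xim Um)
    (A : Matrix (Fin n) (Fin n) ℝ) (B : Matrix (Fin n) (Fin m) ℝ)
    (N : Matrix (Fin n) (Fin T) ℝ)
    (hdata : Xip = A * Xim + B * Um + N)
    (hN : (Δ * Δᵀ - N * Nᵀ).PosSemidef)
    (Psi : Matrix (Fin n ⊕ Fin m) (Fin n ⊕ Fin m) ℝ) (hPsi : Psi = W * Wᵀ)
    (Ups : Matrix (Fin n ⊕ Fin m) (Fin n) ℝ) (hUps : Ups = -(W * Xipᵀ))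
    (Sg : Matrix (Fin n) (Fin n) ℝ) (hSg : Sg = Xip * Xipᵀ - Δ * Δᵀ)
    (P : Matrix (Fin n) (Fin n) ℝ) (Y : Matrix (Fin m) (Fin n) ℝ)
    (hP : P.PosDef)
    (hLMI : (-(fromBlocks (-Sg) (Upsᵀ - (fromRows P Y)ᵀ)
        (Ups - fromRows P Y) (-Psi))).PosDef)
    (K : Matrix (Fin m) (Fin n) ℝ) (hK : K = Y * P⁻¹) :
    (∀ (Ab : Matrix (Fin n) (Fin n) ℝ) (Bb : Matrix (Fin n) (Fin m) ℝ),
      (-(Sg + Upsᵀ * (fromCols Ab Bb)ᵀ + fromCols Ab Bb * Ups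
          + fromCols Ab Bb * Psi * (fromCols Ab Bb)ᵀ)).PosSemidef →
      (-((Ab + Bb * K) * P + P * (Ab + Bb * K)ᵀ)).PosDef)
    ∧ (∀ μ ∈ spectrum ℂ ((A + B * K).map (algebraMap ℝ ℂ)), μ.re < 0) :=
  stmt_7_general T m n p Um Xim Xip Δ W hW A B N hdata hN Psi hPsi Ups hUps Sg hSg P Y hP hLMI K hK
end

section
/- Let N, n, r ≥ 1, let H ∈ ℂ^{N×N} be diagonalizable with eigenvalues λ₁, …, λ_N (i.e., there exists an invertible T ∈ ℂ^{N×N} with T H T⁻¹ = diag(λ₁, …, λ_N)), and let M₁ ∈ ℂ^{n×n}, A ∈ ℂ^{n×n}, M₂ ∈ ℂ^{n×r}, M₃ ∈ ℂ^{r×n}, G ∈ ℂ^{r×r}. Define the network matrix 𝔐 ∈ ℂ^{N(n+r)×N(n+r)} with blocks [[I_N ⊗ A + H ⊗ M₁, I_N ⊗ M₂], [H ⊗ M₃, I_N ⊗ G]]. Then 𝔐 is Hurwitz if and only if, for every i ∈ {1, …, N}, the matrix [[A + λᵢ M₁, M₂], [λᵢ M₃, G]] ∈ ℂ^{(n+r)×(n+r)}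 is Hurwitz. -/
open Matrix Kronecker

private lemma spec_conj_eq {m : Type*} [Fintype m] [DecidableEq m]
    (P Q X : Matrix m m ℂ) (hPQ : P * Q = 1) (hQP : Q * P = 1) :
    spectrum ℂ (P * X * Q) = spectrum ℂ X := by
  have uP : IsUnit P := ⟨⟨P, Q, hPQ, hQP⟩, rfl⟩
  have uQ : IsUnit Q := ⟨⟨Q, P, hQP, hPQ⟩, rfl⟩
  ext μ
  simp only [spectrum.mem_iff]
  have key : algebraMap ℂ (Matrix m m ℂ) μ - P * X * Q
      = P * (algebraMap ℂ (Matrix m m ℂ) μ - X) * Q := by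
    rw [Matrix.mul_sub, Matrix.sub_mul]
    congr 1
    rw [Algebra.algebraMap_eq_smul_one, Matrix.mul_smul, Matrix.mul_one,
      Matrix.smul_mul, hPQ]
  rw [key]
  constructor
  · intro h h2
    exact h ((uP.mul h2).mul uQ)
  · intro h h2
    apply h
    have : Q * (P * (algebraMap ℂ (Matrix m m ℂ) μ - X) * Q) * P
        = algebraMap ℂ (Matrix m m ℂ) μ - X := by
      rw [show Q * (P * (algebraMap ℂ (Matrix m m ℂ) μ - X) * Q) * P
          = (Q * P) * (algebraMap ℂ (Matrix m m ℂ) μ - X) * (Q * P) by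
        noncomm_ring, hQP, Matrix.one_mul, Matrix.mul_one]
    rw [← this]
    exact (uQ.mul h2).mul uP

private lemma spec_blockDiagonal {ι m : Type*} [Fintype ι] [DecidableEq ι]
    [Fintype m] [DecidableEq m] (M : ι → Matrix m m ℂ) (μ : ℂ) :
    μ ∈ spectrum ℂ (blockDiagonal M) ↔ ∃ i, μ ∈ spectrum ℂ (M i) := by
  simp only [spectrum.mem_iff]
  have h1 : algebraMap ℂ (Matrix (m × ι) (m × ι) ℂ) μ - blockDiagonal M
      = blockDiagonal (fun i => algebraMap ℂ (Matrix m m ℂ) μ - M i) := by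
    ext ⟨a, i⟩ ⟨b, j⟩
    by_cases hij : i = j
    · subst hij
      by_cases hab : a = b <;>
        simp [Matrix.blockDiagonal_apply, Algebra.algebraMap_eq_smul_one,
          Matrix.one_apply, hab, Prod.ext_iff]
    · simp [Matrix.blockDiagonal_apply, Algebra.algebraMap_eq_smul_one,
        Matrix.one_apply, hij, Prod.ext_iff]
  rw [h1, Matrix.isUnit_iff_isUnit_det, Matrix.det_blockDiagonal]
  simp only [Matrix.isUnit_iff_isUnit_det, isUnit_iff_ne_zero, ne_eq, not_not,
    Finset.prod_eq_zero_iff, Finset.mem_univ, true_and]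

private def myE (N n r : ℕ) : (Fin N × Fin n ⊕ Fin N × Fin r) ≃ ((Fin n ⊕ Fin r) × Fin N) where
  toFun := Sum.elim (fun p => (Sum.inl p.2, p.1)) (fun p => (Sum.inr p.2, p.1))
  invFun q := Sum.elim (fun x => Sum.inl (q.2, x)) (fun y => Sum.inr (q.2, y)) q.1
  left_inv := by rintro (⟨i, x⟩ | ⟨i, y⟩) <;> rfl
  right_inv := by rintro ⟨(x | y), i⟩ <;> rfl

/-- Network decoupling: for diagonalizable `H` with eigenvalues `λ i`, the network
matrix `[[I_N ⊗ A + H ⊗ M₁, I_N ⊗ M₂], [H ⊗ M₃, I_N ⊗ G]]` is Hurwitz iff each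
decoupled matrix `[[A + λᵢ M₁, M₂], [λᵢ M₃, G]]` is Hurwitz. -/
theorem stmt_12 (N n r : ℕ) (hN : 1 ≤ N) (hn : 1 ≤ n) (hr : 1 ≤ r)
    (H : Matrix (Fin N) (Fin N) ℂ) (lam : Fin N → ℂ)
    (hdiag : ∃ T : Matrix (Fin N) (Fin N) ℂ,
      IsUnit T.det ∧ T * H * T⁻¹ = Matrix.diagonal lam)
    (M1 A : Matrix (Fin n) (Fin n) ℂ) (M2 : Matrix (Fin n) (Fin r) ℂ)
    (M3 : Matrix (Fin r) (Fin n) ℂ) (G : Matrix (Fin r) (Fin r) ℂ)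
    (MM : Matrix (Fin N × Fin n ⊕ Fin N × Fin r) (Fin N × Fin n ⊕ Fin N × Fin r) ℂ)
    (hMM : MM = fromBlocks
      ((1 : Matrix (Fin N) (Fin N) ℂ) ⊗ₖ A + H ⊗ₖ M1)
      ((1 : Matrix (Fin N) (Fin N) ℂ) ⊗ₖ M2)
      (H ⊗ₖ M3)
      ((1 : Matrix (Fin N) (Fin N) ℂ) ⊗ₖ G)) :
    (∀ μ ∈ spectrum ℂ MM, μ.re < 0) ↔
      ∀ i : Fin N, ∀ μ ∈ spectrum ℂ
        (fromBlocks (A + lam i • M1) M2 (lam i • M3) G), μ.re < 0 := by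
  obtain ⟨T, hT, hTH⟩ := hdiag
  have hTT' : T * T⁻¹ = 1 := Matrix.mul_nonsing_inv T hT
  have hT'T : T⁻¹ * T = 1 := Matrix.nonsing_inv_mul T hT
  set D := Matrix.diagonal lam with hD
  set P : Matrix (Fin N × Fin n ⊕ Fin N × Fin r) (Fin N × Fin n ⊕ Fin N × Fin r) ℂ :=
    fromBlocks (T ⊗ₖ (1 : Matrix (Fin n) (Fin n) ℂ)) 0 0
      (T ⊗ₖ (1 : Matrix (Fin r) (Fin r) ℂ)) with hP
  set Q : Matrix (Fin N × Fin n ⊕ Fin N × Fin r) (Fin N × Fin n ⊕ Fin N × Fin r) ℂ :=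
    fromBlocks (T⁻¹ ⊗ₖ (1 : Matrix (Fin n) (Fin n) ℂ)) 0 0
      (T⁻¹ ⊗ₖ (1 : Matrix (Fin r) (Fin r) ℂ)) with hQ
  have hPQ : P * Q = 1 := by
    rw [hP, hQ, Matrix.fromBlocks_multiply]
    simp [← Matrix.mul_kronecker_mul, hTT', Matrix.one_kronecker_one, ← Matrix.fromBlocks_one]
  have hQP : Q * P = 1 := by
    rw [hP, hQ, Matrix.fromBlocks_multiply]
    simp [← Matrix.mul_kronecker_mul, hT'T, Matrix.one_kronecker_one, ← Matrix.fromBlocks_one]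
  set C : Matrix (Fin N × Fin n ⊕ Fin N × Fin r) (Fin N × Fin n ⊕ Fin N × Fin r) ℂ :=
    fromBlocks ((1 : Matrix (Fin N) (Fin N) ℂ) ⊗ₖ A + D ⊗ₖ M1)
      ((1 : Matrix (Fin N) (Fin N) ℂ) ⊗ₖ M2) (D ⊗ₖ M3)
      ((1 : Matrix (Fin N) (Fin N) ℂ) ⊗ₖ G) with hC
  have hconj : P * MM * Q = C := by
    rw [hP, hQ, hC, hMM, Matrix.fromBlocks_multiply, Matrix.fromBlocks_multiply]
    simp [Matrix.mul_add, Matrix.add_mul, ← Matrix.mul_kronecker_mul, hTT', hTH]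
  have hspecC : spectrum ℂ MM = spectrum ℂ C := by
    rw [← hconj, spec_conj_eq P Q MM hPQ hQP]
  set Bd : Matrix ((Fin n ⊕ Fin r) × Fin N) ((Fin n ⊕ Fin r) × Fin N) ℂ :=
    blockDiagonal (fun i => fromBlocks (A + lam i • M1) M2 (lam i • M3) G) with hBd
  have hre : (Matrix.reindexAlgEquiv ℂ ℂ (myE N n r)) C = Bd := by
    ext p q
    obtain ⟨sx, i⟩ := p
    obtain ⟨sy, j⟩ := q
    rcases sx with x | x <;> rcases sy with y | y <;>
      by_cases hij : i = j <;>
      simp [hBd, hC, hD, Matrix.reindexAlgEquiv_apply, Matrix.reindex_apply,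
        Matrix.submatrix_apply, myE, Matrix.blockDiagonal_apply,
        Matrix.fromBlocks_apply₁₁, Matrix.fromBlocks_apply₁₂,
        Matrix.fromBlocks_apply₂₁, Matrix.fromBlocks_apply₂₂,
        Matrix.kroneckerMap_apply, Matrix.one_apply, Matrix.diagonal_apply, hij,
        Matrix.add_apply, Matrix.smul_apply, mul_comm]
  have hspecBd : spectrum ℂ C = spectrum ℂ Bd := by
    rw [← hre]
    exact (AlgEquiv.spectrum_eq (Matrix.reindexAlgEquiv ℂ ℂ (myE N n r)) C).symm
  have hmem : ∀ μ : ℂ, μ ∈ spectrum ℂ MM ↔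
      ∃ i, μ ∈ spectrum ℂ (fromBlocks (A + lam i • M1) M2 (lam i • M3) G) := by
    intro μ
    rw [hspecC, hspecBd, hBd, spec_blockDiagonal]
  constructor
  · intro h i μ hμ
    exact h μ ((hmem μ).2 ⟨i, hμ⟩)
  · intro h μ hμ
    obtain ⟨i, hi⟩ := (hmem μ).1 hμ
    exact h i μ hi
end
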